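/- arXiv:2002.06443 — 3 statements merged into one kernel-verified Lean document; each statement's English description precedes it below -/
import Mathlib

section
/- The function h(a) = (1/2π) ∫₀^{2π} (1 + a cos x) log(1 + a cos x) dx is 1-Lipschitz on [-1,1]. -/
/-!
Write `F a = ∫₀^{2π} φ (1 + a cos x) dx` with `φ u = u log u`. For `|a|, |b| < 1`, the tangent
line inequality for the convex function `φ` gives `F a - F b ≤ (a - b) I a`, where
`I a = ∫₀^{2π} cos x log (1 + a cos x) dx` (the term `∫ cos x` vanishes). Integrating by parts,
`I a = ∫₀^{2π} a sin² x / (1 + a cos x) dx`. This integrand is only bounded by `2`, but pairing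
`x` with `x + π` turns it into `2 a sin² x / (1 - a² cos² x)` on `[0, π]`, which is still bounded
by `2`; hence `|I a| ≤ 2π`. So `F / 2π` is `1`-Lipschitz on `(-1, 1)`, and since `F` is
continuous, also on `[-1, 1]`.
-/

open Real MeasureTheory intervalIntegral Set

lemma mul_log_sub_mul_log_le {u v : ℝ} (hu : 0 < u) (hv : 0 < v) :
    u * log u - v * log v ≤ (1 + log u) * (u - v) := by
  have h : v * (log u - log v) ≤ v * (u / v - 1) := by
    rw [← log_div hu.ne' hv.ne']
    exact mul_le_mul_of_nonneg_left (log_le_sub_one_of_pos (div_pos hu hv)) hv.le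
  rw [mul_sub v (u / v), mul_div_cancel₀ _ hv.ne', mul_one] at h
  linarith

lemma integral_two_mul_eq_integral_add_comp_add_right {g : ℝ → ℝ} {T : ℝ}
    (h₁ : IntervalIntegrable g volume 0 T) (h₂ : IntervalIntegrable g volume T (2 * T)) :
    ∫ x in 0..2 * T, g x = ∫ x in 0..T, (g x + g (x + T)) := by
  have h₂' : IntervalIntegrable (fun x => g (x + T)) volume 0 T := by
    simpa [two_mul] using h₂.comp_add_right T
  rw [integral_add h₁ h₂', integral_comp_add_right, zero_add, ← two_mul,
    integral_add_adjacent_intervals h₁ h₂]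

lemma one_add_mul_cos_pos {t : ℝ} (ht : |t| < 1) (x : ℝ) : 0 < 1 + t * cos x := by
  have : |t * cos x| < 1 := by
    rw [abs_mul]
    exact (mul_le_of_le_one_right (abs_nonneg t) (abs_cos_le_one x)).trans_lt ht
  linarith [neg_abs_le (t * cos x)]

lemma abs_mul_sin_sq_le_one_sub_sq_mul_cos_sq {t : ℝ} (ht : |t| ≤ 1) (x : ℝ) :
    |t| * sin x ^ 2 ≤ 1 - t ^ 2 * cos x ^ 2 := by
  have h : 1 - t ^ 2 * cos x ^ 2 - |t| * sin x ^ 2 = (1 - |t|) * (1 + |t| * cos x ^ 2) := by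
    linear_combination (-(cos x) ^ 2) * (sq_abs t).symm + (-|t|) * sin_sq_add_cos_sq x
  have : 0 ≤ (1 - |t|) * (1 + |t| * cos x ^ 2) :=
    mul_nonneg (by linarith) (by positivity)
  linarith

lemma abs_mul_sin_sq_div_add_shift_le {t : ℝ} (ht : |t| < 1) (x : ℝ) :
    |t * sin x ^ 2 / (1 + t * cos x) + t * sin (x + π) ^ 2 / (1 + t * cos (x + π))| ≤ 2 := by
  have hp := one_add_mul_cos_pos ht x
  have hm : 0 < 1 - t * cos x := by
    simpa [cos_add_pi, sub_eq_add_neg] using one_add_mul_cos_pos ht (x + π)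
  have hd := mul_pos hp hm
  rw [sin_add_pi, cos_add_pi, neg_sq, mul_neg, ← sub_eq_add_neg, div_add_div _ _ hp.ne' hm.ne',
    abs_div, abs_of_pos hd, div_le_iff₀ hd]
  calc |t * sin x ^ 2 * (1 - t * cos x) + (1 + t * cos x) * (t * sin x ^ 2)|
      = |2 * t * sin x ^ 2| := by ring_nf
    _ = 2 * (|t| * sin x ^ 2) := by rw [abs_mul, abs_mul, abs_two, abs_sq, mul_assoc]
    _ ≤ 2 * ((1 + t * cos x) * (1 - t * cos x)) := by
        have := abs_mul_sin_sq_le_one_sub_sq_mul_cos_sq ht.le x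
        linarith

lemma integral_cos_mul_log_one_add_mul_cos {t : ℝ} (ht : |t| < 1) :
    ∫ x in 0..2 * π, cos x * log (1 + t * cos x)
      = ∫ x in 0..2 * π, t * sin x ^ 2 / (1 + t * cos x) := by
  have hpos := one_add_mul_cos_pos ht
  have hlog (x : ℝ) :
      HasDerivAt (fun y => log (1 + t * cos y)) (t * -sin x / (1 + t * cos x)) x :=
    (((hasDerivAt_cos x).const_mul t).const_add 1).log (hpos x).ne'
  have hparts := integral_mul_deriv_eq_deriv_mul (a := 0) (b := 2 * π)
    (fun x _ => hasDerivAt_sin x) (fun x _ => hlog x)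
    (continuous_cos.intervalIntegrable _ _)
    ((by fun_prop (disch := exact fun x => (hpos x).ne') :
      Continuous fun x => t * -sin x / (1 + t * cos x)).intervalIntegrable _ _)
  rw [sin_two_pi, sin_zero, zero_mul, zero_mul, sub_zero, zero_sub] at hparts
  rw [← neg_eq_iff_eq_neg.2 hparts, ← intervalIntegral.integral_neg]
  congr 1
  ext x
  ring

lemma abs_integral_cos_mul_log_one_add_mul_cos_le {t : ℝ} (ht : |t| < 1) :
    |∫ x in 0..2 * π, cos x * log (1 + t * cos x)| ≤ 2 * π := by
  have hpos := one_add_mul_cos_pos ht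
  have hcont : Continuous fun x => t * sin x ^ 2 / (1 + t * cos x) := by
    fun_prop (disch := exact fun x => (hpos x).ne')
  rw [integral_cos_mul_log_one_add_mul_cos ht, integral_two_mul_eq_integral_add_comp_add_right
    (hcont.intervalIntegrable _ _) (hcont.intervalIntegrable _ _), ← norm_eq_abs]
  calc _ ≤ 2 * |π - 0| :=
        norm_integral_le_of_norm_le_const fun x _ => abs_mul_sin_sq_div_add_shift_le ht x
    _ = 2 * π := by rw [sub_zero, abs_of_pos pi_pos]

noncomputable def cosEntropy (a : ℝ) : ℝ :=
  ∫ x in 0..2 * π, (1 + a * cos x) * log (1 + a * cos x)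

lemma continuous_cosEntropy : Continuous cosEntropy :=
  continuous_parametric_intervalIntegral_of_continuous' (Continuous.mul_log (by fun_prop)) _ _

lemma cosEntropy_sub_le {a b : ℝ} (ha : |a| < 1) (hb : |b| < 1) :
    cosEntropy a - cosEntropy b ≤ (a - b) * ∫ x in 0..2 * π, cos x * log (1 + a * cos x) := by
  have hpa := one_add_mul_cos_pos ha
  have hpb := one_add_mul_cos_pos hb
  have hint (c : ℝ) :
      IntervalIntegrable (fun x => (1 + c * cos x) * log (1 + c * cos x)) volume 0 (2 * π) :=
    (by fun_prop : Continuous _).intervalIntegrable _ _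
  have hcos_log : Continuous fun x => cos x * log (1 + a * cos x) := by
    fun_prop (disch := exact fun x => (hpa x).ne')
  calc cosEntropy a - cosEntropy b
      = ∫ x in 0..2 * π, ((1 + a * cos x) * log (1 + a * cos x)
          - (1 + b * cos x) * log (1 + b * cos x)) := (integral_sub (hint a) (hint b)).symm
    _ ≤ ∫ x in 0..2 * π, (a - b) * (cos x + cos x * log (1 + a * cos x)) := by
        refine integral_mono_on (by positivity) ((hint a).sub (hint b))
          (((continuous_cos.add hcos_log).const_mul (a - b)).intervalIntegrable _ _) fun x _ => ?_
        convert mul_log_sub_mul_log_le (hpa x) (hpb x) using 1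
        ring
    _ = (a - b) * ∫ x in 0..2 * π, cos x * log (1 + a * cos x) := by
        rw [intervalIntegral.integral_const_mul,
          integral_add (continuous_cos.intervalIntegrable _ _) (hcos_log.intervalIntegrable _ _),
          integral_cos, sin_two_pi, sin_zero, sub_zero, zero_add]

lemma cosEntropy_sub_le_two_pi_mul_abs {a b : ℝ} (ha : |a| < 1) (hb : |b| < 1) :
    cosEntropy a - cosEntropy b ≤ 2 * π * |a - b| :=
  calc cosEntropy a - cosEntropy b
      ≤ (a - b) * ∫ x in 0..2 * π, cos x * log (1 + a * cos x) := cosEntropy_sub_le ha hb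
    _ ≤ |(a - b) * ∫ x in 0..2 * π, cos x * log (1 + a * cos x)| := le_abs_self _
    _ ≤ 2 * π * |a - b| := by
        rw [abs_mul, mul_comm]
        exact mul_le_mul_of_nonneg_right (abs_integral_cos_mul_log_one_add_mul_cos_le ha)
          (abs_nonneg _)

lemma abs_cosEntropy_sub_le {a b : ℝ} (ha : |a| < 1) (hb : |b| < 1) :
    |cosEntropy a - cosEntropy b| ≤ 2 * π * |a - b| :=
  abs_sub_le_iff.2 ⟨cosEntropy_sub_le_two_pi_mul_abs ha hb,
    abs_sub_comm a b ▸ cosEntropy_sub_le_two_pi_mul_abs hb ha⟩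

/-- `h a = (1/2π) ∫₀^{2π} (1 + a cos x) log(1 + a cos x) dx` is 1-Lipschitz on `[-1,1]`. -/
theorem stmt2 :
    LipschitzOnWith 1
      (fun a : ℝ => (1 / (2 * Real.pi)) * ∫ x in (0 : ℝ)..(2 * Real.pi),
        (1 + a * Real.cos x) * Real.log (1 + a * Real.cos x))
      (Set.Icc (-1 : ℝ) 1) := by
  change LipschitzOnWith 1 (fun a => 1 / (2 * π) * cosEntropy a) _
  rw [← closure_Ioo (by norm_num : (-1 : ℝ) ≠ 1)]
  refine LipschitzOnWith.closure (continuous_const.mul continuous_cosEntropy).continuousOn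
    (LipschitzOnWith.of_dist_le_mul fun a ha b hb => ?_)
  have hπ : 0 < 2 * π := by positivity
  calc dist (1 / (2 * π) * cosEntropy a) (1 / (2 * π) * cosEntropy b)
      = |cosEntropy a - cosEntropy b| / (2 * π) := by
        rw [dist_eq, ← mul_sub, abs_mul, abs_of_pos (one_div_pos.2 hπ), one_div_mul_eq_div]
    _ ≤ 2 * π * |a - b| / (2 * π) := by
        gcongr
        exact abs_cosEntropy_sub_le (abs_lt.2 ha) (abs_lt.2 hb)
    _ = 1 * dist a b := by rw [one_mul, dist_eq, mul_div_cancel_left₀ _ hπ.ne']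
end

section
/- The function h(a) = (1/2π) ∫₀^{2π} (1 + a cos x) log(1 + a cos x) dx is convex on [-1,1]. -/
/-- `h a = (1/2π) ∫₀^{2π} (1 + a cos x) log(1 + a cos x) dx` is convex on `[-1,1]`. -/
theorem stmt3 :
    ConvexOn ℝ (Set.Icc (-1 : ℝ) 1)
      (fun a : ℝ => (1 / (2 * Real.pi)) * ∫ x in (0 : ℝ)..(2 * Real.pi),
        (1 + a * Real.cos x) * Real.log (1 + a * Real.cos x)) := by
  have hmem : ∀ a ∈ Set.Icc (-1 : ℝ) 1, ∀ x : ℝ, (0 : ℝ) ≤ 1 + a * Real.cos x := by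
    intro a ha x
    have h1 : |a * Real.cos x| ≤ 1 := by
      rw [abs_mul]
      calc |a| * |Real.cos x| ≤ 1 * 1 := by
            apply mul_le_mul (abs_le.2 ⟨ha.1, ha.2⟩) (Real.abs_cos_le_one x)
              (abs_nonneg _) zero_le_one
        _ = 1 := by ring
    linarith [neg_le_of_abs_le h1]
  have hcont : ∀ a : ℝ, Continuous fun x : ℝ =>
      (1 + a * Real.cos x) * Real.log (1 + a * Real.cos x) := by
    intro a
    exact Real.continuous_mul_log.comp (by continuity)
  have hint : ∀ a : ℝ, IntervalIntegrable
      (fun x : ℝ => (1 + a * Real.cos x) * Real.log (1 + a * Real.cos x))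
      MeasureTheory.volume 0 (2 * Real.pi) :=
    fun a => (hcont a).intervalIntegrable _ _
  refine ⟨convex_Icc _ _, ?_⟩
  intro a ha b hb α β hα hβ hab
  simp only [smul_eq_mul]
  have key : (∫ x in (0:ℝ)..(2*Real.pi),
      (1 + (α * a + β * b) * Real.cos x) * Real.log (1 + (α * a + β * b) * Real.cos x))
      ≤ α * (∫ x in (0:ℝ)..(2*Real.pi), (1 + a * Real.cos x) * Real.log (1 + a * Real.cos x))
      + β * (∫ x in (0:ℝ)..(2*Real.pi), (1 + b * Real.cos x) * Real.log (1 + b * Real.cos x)) := by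
    rw [← intervalIntegral.integral_const_mul, ← intervalIntegral.integral_const_mul,
      ← intervalIntegral.integral_add ((hint a).const_mul α) ((hint b).const_mul β)]
    apply intervalIntegral.integral_mono_on (by positivity) (hint _)
      (((hint a).const_mul α).add ((hint b).const_mul β))
    intro x _
    have hconv := Real.convexOn_mul_log.2 (hmem a ha x) (hmem b hb x) hα hβ hab
    simp only [smul_eq_mul] at hconv
    have heq : α * (1 + a * Real.cos x) + β * (1 + b * Real.cos x)
        = 1 + (α * a + β * b) * Real.cos x := by nlinarith [hab]
    rw [heq] at hconv
    exact hconv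
  have hpi : (0:ℝ) < 1 / (2 * Real.pi) := by positivity
  nlinarith [mul_le_mul_of_nonneg_left key hpi.le]
end

section
/- Let q ≥ 2 and let H be a subgroup of ℤ_q. Define W_H = {v ∈ ℝ^q : v̂(m) = 0 for all m ∉ H, and v̂(0) = 0}, where v̂ is the discrete Fourier transform on ℤ_q. Then for any p ∈ (1, ∞) and any v ∈ W_H with v_j ≥ −1 for all j, one has ((1/q) ∑_{j=0}^{q-1} |1 + v_j|^p)^{1/p} ≤ |H|^{(p−1)/p}. -/
/-!
Put `F = 1 + v ≥ 0`. Its Fourier transform vanishes off `H` (at `m ≠ 0` the constant contributes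
nothing, and `0 ∈ H`), and `|𝓕 F m| ≤ ∑ F = 𝓕 F 0 = q`. Fourier inversion then gives the pointwise
bound `F j ≤ (1/q) ∑_{m ∈ H} |𝓕 F m| ≤ |H|`, hence `∑ F^p ≤ |H|^(p-1) ∑ F = |H|^(p-1) q`.
-/

open Finset ZMod

namespace ZMod

variable {N : ℕ} [NeZero N]

lemma dft_apply_eq_sum_mul_exp (Φ : ZMod N → ℂ) (k : ZMod N) :
    𝓕 Φ k = ∑ j, Φ j * Complex.exp (-2 * Real.pi * Complex.I * (k.val * j.val) / N) := by
  refine sum_congr rfl fun j _ => ?_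
  have hcast : -(j * k) = ((-(j.val * k.val : ℤ) : ℤ) : ZMod N) := by push_cast; simp
  rw [hcast, stdAddChar_coe, smul_eq_mul, mul_comm]
  push_cast
  ring_nf

lemma dft_one_apply_of_ne_zero {k : ZMod N} (hk : k ≠ 0) : 𝓕 (fun _ ↦ (1 : ℂ)) k = 0 := by
  classical
  simpa [dft_apply, hk] using AddChar.sum_mulShift (-k) (isPrimitive_stdAddChar N)

variable {E : Type*} [NormedAddCommGroup E] [NormedSpace ℂ E]

lemma norm_stdAddChar_smul (j : ZMod N) (x : E) : ‖stdAddChar j • x‖ = ‖x‖ := by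
  rw [norm_smul, stdAddChar_apply, Circle.norm_coe, one_mul]

lemma norm_dft_le_sum_norm (Φ : ZMod N → E) (k : ZMod N) : ‖𝓕 Φ k‖ ≤ ∑ j, ‖Φ j‖ :=
  (norm_sum_le _ _).trans_eq (by simp only [norm_stdAddChar_smul])

lemma mul_norm_le_card_mul_sum_norm_of_dft_eq_zero (Φ : ZMod N → E) {S : Finset (ZMod N)}
    (hS : ∀ m ∉ S, 𝓕 Φ m = 0) (k : ZMod N) : N * ‖Φ k‖ ≤ #S * ∑ j, ‖Φ j‖ := by
  have hinv : Φ k = (N : ℂ)⁻¹ • ∑ m ∈ S, stdAddChar (m * k) • 𝓕 Φ m := by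
    conv_lhs => rw [← dft.symm_apply_apply Φ, invDFT_apply]
    rw [sum_subset (subset_univ S) fun m _ hm ↦ by rw [hS m hm, smul_zero]]
  calc (N : ℝ) * ‖Φ k‖ = ‖∑ m ∈ S, stdAddChar (m * k) • 𝓕 Φ m‖ := by
        rw [hinv, norm_smul, norm_inv, Complex.norm_natCast, mul_inv_cancel_left₀ (NeZero.ne _)]
    _ ≤ ∑ m ∈ S, ‖𝓕 Φ m‖ := (norm_sum_le _ _).trans_eq (by simp only [norm_stdAddChar_smul])
    _ ≤ #S * ∑ j, ‖Φ j‖ := by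
        simpa using sum_le_sum fun m (_ : m ∈ S) ↦ norm_dft_le_sum_norm Φ m

end ZMod

lemma Real.sum_rpow_le_rpow_sub_one_mul_sum {ι : Type*} (s : Finset ι) {F : ι → ℝ} {M p : ℝ}
    (hF : ∀ i ∈ s, 0 ≤ F i) (hFM : ∀ i ∈ s, F i ≤ M) (hp : 1 ≤ p) :
    ∑ i ∈ s, F i ^ p ≤ M ^ (p - 1) * ∑ i ∈ s, F i := by
  rw [mul_sum]
  refine sum_le_sum fun i hi ↦ ?_
  have hFi := hF i hi
  have hFMi := hFM i hi
  calc F i ^ p = F i ^ (p - 1) * F i := by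
        rw [← Real.rpow_add_one' hFi (by linarith), sub_add_cancel]
    _ ≤ M ^ (p - 1) * F i := by gcongr

theorem stmt13_general (q : ℕ) [NeZero q] (H : AddSubgroup (ZMod q)) (v : ZMod q → ℝ)
    (hsupp : ∀ m : ZMod q, m ∉ H →
      ∑ j : ZMod q, (v j : ℂ) *
        Complex.exp (-2 * Real.pi * Complex.I * ((m.val : ℂ) * (j.val : ℂ)) / q) = 0)
    (hzero : ∑ j : ZMod q, v j = 0)
    (p : ℝ) (hp : 1 < p) (hv : ∀ j, -1 ≤ v j) :
    ((1 / q) * ∑ j : ZMod q, |1 + v j| ^ p) ^ (1 / p) ≤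
      (Nat.card H : ℝ) ^ ((p - 1) / p) := by
  classical
  have hq : (0 : ℝ) < q := Nat.cast_pos.2 (NeZero.pos q)
  set F : ZMod q → ℝ := fun j ↦ 1 + v j
  have hF_nonneg (j : ZMod q) : 0 ≤ F j := by linarith [hv j]
  have hF_sum : ∑ j, F j = q := by simp [F, sum_add_distrib, hzero]
  have hF_dft : ∀ m ∉ (H : Set (ZMod q)).toFinset, 𝓕 (fun j ↦ (F j : ℂ)) m = 0 := by
    intro m hm
    rw [Set.mem_toFinset, SetLike.mem_coe] at hm
    have hm0 : m ≠ 0 := fun h ↦ hm (h ▸ H.zero_mem)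
    have hsplit : (fun j ↦ (F j : ℂ)) = (fun _ ↦ 1) + fun j ↦ (v j : ℂ) := by ext; simp [F]
    rw [hsplit, map_add, Pi.add_apply, dft_one_apply_of_ne_zero hm0, dft_apply_eq_sum_mul_exp,
      hsupp m hm, add_zero]
  have hF_le (j : ZMod q) : F j ≤ Nat.card H := by
    have := mul_norm_le_card_mul_sum_norm_of_dft_eq_zero _ hF_dft j
    simp only [Complex.norm_real, Real.norm_of_nonneg (hF_nonneg _), hF_sum,
      ← Nat.card_eq_card_toFinset] at this
    exact le_of_mul_le_mul_left (this.trans_eq (mul_comm _ _)) hq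
  have hmean : (1 / q) * ∑ j, |1 + v j| ^ p ≤ (Nat.card H : ℝ) ^ (p - 1) := by
    have := Real.sum_rpow_le_rpow_sub_one_mul_sum univ (fun j _ ↦ hF_nonneg j)
      (fun j _ ↦ hF_le j) hp.le
    have habs (j : ZMod q) : |1 + v j| = F j := abs_of_nonneg (hF_nonneg j)
    rw [hF_sum] at this
    rwa [one_div_mul_eq_div, div_le_iff₀ hq, sum_congr rfl fun j _ ↦ by rw [habs j]]
  calc _ ≤ ((Nat.card H : ℝ) ^ (p - 1)) ^ (1 / p) := by gcongr
    _ = _ := by rw [← Real.rpow_mul (by positivity)]; ring_nf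

/-- If `v ∈ ℝ^q` has DFT supported on a subgroup `H` of `ℤ_q`, vanishing at `0`, and
`v_j ≥ -1`, then `((1/q) ∑ |1+v_j|^p)^{1/p} ≤ |H|^{(p-1)/p}` for `p ∈ (1,∞)`. -/
theorem stmt13 (q : ℕ) [NeZero q] (h2 : 2 ≤ q) (H : AddSubgroup (ZMod q)) (v : ZMod q → ℝ)
    (hsupp : ∀ m : ZMod q, m ∉ H →
      ∑ j : ZMod q, (v j : ℂ) *
        Complex.exp (-2 * Real.pi * Complex.I * ((m.val : ℂ) * (j.val : ℂ)) / q) = 0)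
    (hzero : ∑ j : ZMod q, v j = 0)
    (p : ℝ) (hp : 1 < p) (hv : ∀ j, -1 ≤ v j) :
    ((1 / q) * ∑ j : ZMod q, |1 + v j| ^ p) ^ (1 / p) ≤
      (Nat.card H : ℝ) ^ ((p - 1) / p) :=
  stmt13_general q H v hsupp hzero p hp hv
end
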